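/- arXiv:2407.10557 — 2 statements merged into one kernel-verified Lean document; each statement's English description precedes it below -/
import Mathlib

section
/- For a, b > 0 and p ∈ ℝ, the function x ↦ ((a/b)^(p/2) / (2 K_p(√(ab)))) · x^(p-1) · exp(-(a x + b/x)/2) on (0, ∞) integrates to 1, i.e., ∫_0^∞ x^(p-1) exp(-(a x + b/x)/2) dx = 2 (b/a)^(p/2) K_p(√(ab)). -/
open MeasureTheory Real Filter Set

/-! The substitution `x = √(b/a) eᵗ` turns `a x + b / x` into `2 √(ab) cosh t` and
`x ^ (p - 1) dx` into `(b/a) ^ (p/2) e^{pt} dt`, so the integral becomes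
`(b/a) ^ (p/2) ∫_ℝ exp (p t - √(ab) cosh t) dt`. Averaging this with its reflection `t ↦ -t`
gives the even integrand `exp (-√(ab) cosh t) cosh (p t)`, whose integral over `ℝ` is
`2 K_p(√(ab))`.
Since `K_p > 0`, the normalised density then integrates to `1`. -/

/-- Modified Bessel function of the second kind (for `x > 0`),
via the integral representation `K_p(x) = ∫_0^∞ exp(-x cosh t) cosh(p t) dt`. -/
noncomputable def besselK (p x : ℝ) : ℝ :=
  ∫ t in Set.Ioi (0:ℝ), Real.exp (-x * Real.cosh t) * Real.cosh (p * t)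

/-- The generalized inverse Gaussian density on `(0, ∞)`. -/
noncomputable def gigDensity (a b p x : ℝ) : ℝ :=
  if 0 < x then
    (a / b) ^ (p / 2) / (2 * besselK p (Real.sqrt (a * b)))
      * x ^ (p - 1) * Real.exp (-(a * x + b / x) / 2)
  else 0

lemma tendsto_mul_sub_mul_cosh_atBot (A : ℝ) {B : ℝ} (hB : 0 < B) :
    Tendsto (fun t : ℝ => A * t - B * cosh t) atTop atBot := by
  -- `A t - B cosh t ≤ (A t e⁻ᵗ - B / 2) eᵗ`, and the first factor tends to `-B / 2`.
  have h : Tendsto (fun t : ℝ => (A * (t * exp (-t)) - B / 2) * exp t) atTop atBot := by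
    refine Tendsto.neg_mul_atTop (C := -(B / 2)) (by linarith) ?_ tendsto_exp_atTop
    have h0 : Tendsto (fun t : ℝ => t * exp (-t)) atTop (nhds 0) := by
      simpa using tendsto_pow_mul_exp_neg_atTop_nhds_zero 1
    simpa using (h0.const_mul A).sub_const (B / 2)
  refine tendsto_atBot_mono (fun t => ?_) h
  have hcosh : exp t / 2 ≤ cosh t := by
    rw [cosh_eq]
    linarith [exp_pos (-t)]
  have hrw : (A * (t * exp (-t)) - B / 2) * exp t = A * t - B / 2 * exp t := by
    rw [exp_neg]
    field_simp
  rw [hrw]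
  nlinarith

lemma exp_mul_sub_mul_cosh_isBigO (q : ℝ) {c : ℝ} (hc : 0 < c) :
    (fun t => exp (q * t - c * cosh t)) =O[atTop] fun t => exp (-t) := by
  refine Asymptotics.IsBigO.of_bound 1 ?_
  filter_upwards [(tendsto_mul_sub_mul_cosh_atBot (q + 1) hc).eventually_le_atBot 0] with t ht
  rw [norm_of_nonneg (exp_pos _).le, norm_of_nonneg (exp_pos _).le, one_mul, exp_le_exp]
  linarith

lemma exp_neg_mul_cosh_mul_cosh_eq (q c t : ℝ) :
    exp (-c * cosh t) * cosh (q * t)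
      = (exp (q * t - c * cosh t) + exp (-q * t - c * cosh t)) / 2 := by
  have hsplit (r : ℝ) : exp (r * t - c * cosh t) = exp (-c * cosh t) * exp (r * t) := by
    rw [← exp_add]
    ring_nf
  rw [hsplit, hsplit, cosh_eq (q * t), neg_mul q t]
  ring

lemma integrable_exp_neg_mul_cosh_mul_cosh (q : ℝ) {c : ℝ} (hc : 0 < c) :
    Integrable fun t => exp (-c * cosh t) * cosh (q * t) := by
  refine (Continuous.locallyIntegrable (by fun_prop))
    |>.integrable_of_isBigO_atTop_of_norm_isNegInvariant ?_ ?_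
      ⟨Ioi 0, Ioi_mem_atTop 0, by simpa using exp_neg_integrableOn_Ioi 0 one_pos⟩
  · exact ae_of_all _ fun t => by simp [cosh_neg]
  · simp_rw [exp_neg_mul_cosh_mul_cosh_eq q c]
    simpa only [div_eq_inv_mul] using ((exp_mul_sub_mul_cosh_isBigO q hc).add
      (exp_mul_sub_mul_cosh_isBigO (-q) hc)).const_mul_left 2⁻¹

lemma besselK_pos (p : ℝ) {x : ℝ} (hx : 0 < x) : 0 < besselK p x := by
  refine (setIntegral_pos_iff_support_of_nonneg_ae (ae_of_all _ fun t => by positivity)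
    (integrable_exp_neg_mul_cosh_mul_cosh p hx).integrableOn).mpr ?_
  have hsupp : Function.support (fun t => exp (-x * cosh t) * cosh (p * t)) = univ :=
    eq_univ_of_forall fun t => Function.mem_support.mpr (by positivity)
  rw [hsupp, univ_inter, volume_Ioi]
  exact ENNReal.zero_lt_top

lemma integral_exp_mul_sub_mul_cosh (q : ℝ) {c : ℝ} (hc : 0 < c) :
    ∫ t, exp (q * t - c * cosh t) = 2 * besselK q c := by
  have hint (r : ℝ) : Integrable fun t => exp (r * t - c * cosh t) :=
    (integrable_exp_neg_mul_cosh_mul_cosh r hc).const_mul 2 |>.mono' (by fun_prop)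
      (ae_of_all _ fun t => by
        rw [norm_of_nonneg (exp_pos _).le, exp_neg_mul_cosh_mul_cosh_eq]
        linarith [exp_pos (-r * t - c * cosh t)])
  have hneg : ∫ t, exp (-q * t - c * cosh t) = ∫ t, exp (q * t - c * cosh t) := by
    rw [← integral_neg_eq_self]
    simp [cosh_neg]
  have heven : ∫ t, exp (-c * cosh t) * cosh (q * t)
      = ∫ t, exp (-c * cosh |t|) * cosh (q * |t|) := by
    congr 1 with t
    rcases abs_choice t with h | h <;> simp [h, cosh_neg]
  rw [besselK, ← integral_comp_abs (f := fun t => exp (-c * cosh t) * cosh (q * t)), ← heven]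
  simp_rw [exp_neg_mul_cosh_mul_cosh_eq q c]
  rw [integral_div, integral_add (hint q) (hint (-q)), hneg]
  ring

lemma integral_Ioi_eq_integral_mul_exp {E : Type*} [NormedAddCommGroup E] [NormedSpace ℝ E]
    (g : ℝ → E) {s : ℝ} (hs : 0 < s) :
    ∫ x in Ioi 0, g x = ∫ t, (s * exp t) • g (s * exp t) := by
  have hrange : range (fun t => s * exp t) = Ioi 0 := by
    ext x
    refine ⟨by rintro ⟨t, rfl⟩; exact mul_pos hs (exp_pos t), fun hx => ⟨log (x / s), ?_⟩⟩
    change s * exp (log (x / s)) = x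
    rw [exp_log (div_pos hx hs)]
    field_simp
  have hsubst := integral_image_eq_integral_abs_deriv_smul MeasurableSet.univ
    (fun t _ => ((hasDerivAt_exp t).const_mul s).hasDerivWithinAt)
    (fun t _ u _ h => exp_injective (mul_left_cancel₀ hs.ne' h)) g
  rw [image_univ, hrange, setIntegral_univ] at hsubst
  simp_rw [hsubst, abs_of_pos (mul_pos hs (exp_pos _))]

lemma mul_sqrt_div {a : ℝ} (ha : 0 < a) (b : ℝ) : a * √(b / a) = √(a * b) := by
  rw [← sqrt_sq ha.le, ← sqrt_mul (sq_nonneg a), sqrt_sq ha.le]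
  congr 1
  field_simp

lemma div_sqrt_div {a b : ℝ} (ha : 0 < a) (hb : 0 < b) : b / √(b / a) = √(a * b) := by
  rw [div_eq_iff (sqrt_pos.2 (div_pos hb ha)).ne', ← sqrt_mul (mul_pos ha hb).le,
    show a * b * (b / a) = b ^ 2 by field_simp, sqrt_sq hb.le]

lemma mul_add_div_sqrt_div_mul_exp {a b : ℝ} (ha : 0 < a) (hb : 0 < b) (t : ℝ) :
    a * (√(b / a) * exp t) + b / (√(b / a) * exp t) = 2 * √(a * b) * cosh t := by
  rw [← mul_assoc, mul_sqrt_div ha b, div_mul_eq_div_div, div_sqrt_div ha hb, cosh_eq,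
    exp_neg]
  ring

lemma sqrt_div_mul_exp_rpow {a b : ℝ} (ha : 0 < a) (hb : 0 < b) (p t : ℝ) :
    (√(b / a) * exp t) ^ p = (b / a) ^ (p / 2) * exp (p * t) := by
  rw [mul_rpow (sqrt_nonneg _) (exp_pos t).le, sqrt_eq_rpow, ← rpow_mul (div_pos hb ha).le,
    ← exp_mul, mul_comm t p, one_div_mul_eq_div]

theorem integral_rpow_mul_exp_eq_besselK (p : ℝ) {a b : ℝ} (ha : 0 < a) (hb : 0 < b) :
    ∫ x in Ioi 0, x ^ (p - 1) * exp (-(a * x + b / x) / 2)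
      = 2 * (b / a) ^ (p / 2) * besselK p √(a * b) := by
  have hs : 0 < √(b / a) := sqrt_pos.2 (div_pos hb ha)
  have hintegrand (t : ℝ) : (√(b / a) * exp t) • ((√(b / a) * exp t) ^ (p - 1)
      * exp (-(a * (√(b / a) * exp t) + b / (√(b / a) * exp t)) / 2))
      = (b / a) ^ (p / 2) * exp (p * t - √(a * b) * cosh t) := by
    have hx : 0 < √(b / a) * exp t := mul_pos hs (exp_pos t)
    have hpow :
        (√(b / a) * exp t) * (√(b / a) * exp t) ^ (p - 1) = (√(b / a) * exp t) ^ p := by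
      rw [rpow_sub_one hx.ne']
      field_simp
    rw [smul_eq_mul, ← mul_assoc, hpow, sqrt_div_mul_exp_rpow ha hb,
      mul_add_div_sqrt_div_mul_exp ha hb, mul_assoc, ← exp_add]
    ring_nf
  rw [integral_Ioi_eq_integral_mul_exp _ hs]
  simp_rw [hintegrand]
  rw [integral_const_mul, integral_exp_mul_sub_mul_cosh p (sqrt_pos.2 (mul_pos ha hb))]
  ring

/-- The GIG density integrates to 1; equivalently
`∫_0^∞ x^(p-1) exp(-(a x + b/x)/2) dx = 2 (b/a)^(p/2) K_p(√(ab))`. -/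
theorem gig_density_integrates_to_one (a b p : ℝ) (ha : 0 < a) (hb : 0 < b) :
    (∫ x in Set.Ioi (0:ℝ), gigDensity a b p x) = 1 ∧
    (∫ x in Set.Ioi (0:ℝ), x ^ (p - 1) * Real.exp (-(a * x + b / x) / 2))
      = 2 * (b / a) ^ (p / 2) * besselK p (Real.sqrt (a * b)) := by
  have hK := besselK_pos p (sqrt_pos.2 (mul_pos ha hb))
  have hnorm : (a / b) ^ (p / 2) * (b / a) ^ (p / 2) = 1 := by
    rw [← inv_div, inv_rpow (div_pos hb ha).le,
      inv_mul_cancel₀ (rpow_pos_of_pos (div_pos hb ha) _).ne']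
  refine ⟨?_, integral_rpow_mul_exp_eq_besselK p ha hb⟩
  calc ∫ x in Ioi 0, gigDensity a b p x
      = (a / b) ^ (p / 2) / (2 * besselK p √(a * b))
          * ∫ x in Ioi 0, x ^ (p - 1) * exp (-(a * x + b / x) / 2) := by
        rw [← integral_const_mul]
        refine setIntegral_congr_fun measurableSet_Ioi fun x hx => ?_
        rw [gigDensity, if_pos (mem_Ioi.mp hx), mul_assoc]
    _ = 1 := by
        rw [integral_rpow_mul_exp_eq_besselK p ha hb]
        field_simp
        exact hnorm
end

section
/- For a, b > 0, p ∈ ℝ, and any complex number s, the Mellin transform of the GIG density equals ∫_0^∞ x^(s-1) f(x) dx = (a/b)^((1-s)/2) · K_{s+p-1}(√(ab)) / K_p(√(ab)), and in particular this integral converges absolutely for every s ∈ ℂ. -/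
open MeasureTheory Real Filter Set

/-- Modified Bessel function of the second kind with complex order. -/
noncomputable def besselKC (ν : ℂ) (x : ℝ) : ℂ :=
  ∫ t in Set.Ioi (0:ℝ), Complex.exp (-(x:ℂ) * Real.cosh t) * Complex.cosh (ν * t)

/-! Substituting `x = (√(ab)/a) eᵗ` turns `a x + b/x` into `2 √(ab) cosh t`, so the Mellin
transform of `x ↦ exp (-(a x + b/x)/2)` at `ν` becomes
`(a/b)^(-ν/2) ∫_ℝ e^{νt} e^{-√(ab) cosh t} dt`. Folding the real line onto `(0, ∞)` turns
`e^{νt}` into `2 cosh (νt)`, which gives `2 (a/b)^(-ν/2) K_ν(√(ab))`. Since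
`x^(s-1) f(x)` is a constant multiple of `x^(ν-1) exp (-(a x + b/x)/2)` with `ν = s + p - 1`,
the theorem follows. Absolute convergence comes from the Gaussian bound `cosh t ≥ t²/4`. -/

open scoped Complex

lemma sq_div_four_le_cosh (t : ℝ) : t ^ 2 / 4 ≤ cosh t := by
  rw [← cosh_abs, cosh_eq]
  nlinarith [quadratic_le_exp_of_nonneg (abs_nonneg t), exp_pos (-|t|), sq_abs t, abs_nonneg t]

lemma integrable_cexp_mul_mul_cexp_neg_mul_cosh (ν : ℂ) {c : ℝ} (hc : 0 < c) :
    Integrable fun t : ℝ => cexp (ν * t) * cexp (-c * cosh t) := by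
  refine (integrable_cexp_quadratic (b := c / 4) (by simpa using by positivity) ν 0).mono
    (by fun_prop) (Eventually.of_forall fun t => ?_)
  simp only [norm_mul, Complex.norm_exp, ← Real.exp_add]
  gcongr
  simp only [Complex.add_re, Complex.mul_re, Complex.neg_re, Complex.div_ofNat_re,
    ← Complex.ofReal_pow, Complex.ofReal_re, Complex.ofReal_im, mul_zero, sub_zero, add_zero]
  nlinarith [sq_div_four_le_cosh t]

lemma integral_cexp_mul_mul_cexp_neg_mul_cosh (ν : ℂ) {c : ℝ} (hc : 0 < c) :
    ∫ t : ℝ, cexp (ν * t) * cexp (-c * cosh t) = 2 * besselKC ν c := by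
  set F := fun t : ℝ => cexp (ν * t) * cexp (-c * cosh t)
  have hF : Integrable F := integrable_cexp_mul_mul_cexp_neg_mul_cosh ν hc
  have hflip : ∫ t in Iic 0, F t = ∫ t in Ioi 0, F (-t) := by
    simpa only [neg_neg, neg_zero] using integral_comp_neg_Iic 0 fun t => F (-t)
  calc ∫ t, F t = (∫ t in Iic 0, F t) + ∫ t in Ioi 0, F t :=
        (intervalIntegral.integral_Iic_add_Ioi hF.integrableOn hF.integrableOn).symm
    _ = ∫ t in Ioi 0, (F (-t) + F t) := by
        rw [hflip, integral_add hF.comp_neg.integrableOn hF.integrableOn]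
    _ = ∫ t in Ioi 0, 2 * (cexp (-c * cosh t) * Complex.cosh (ν * t)) := by
        congr 1 with t
        simp only [F, Complex.cosh, cosh_neg, Complex.ofReal_neg, mul_neg]
        ring
    _ = 2 * besselKC ν c := integral_const_mul _ _

section Substitution

variable {E : Type*} [NormedAddCommGroup E] [NormedSpace ℝ E] {r : ℝ}

lemma image_univ_mul_exp (hr : 0 < r) : (fun t => r * exp t) '' univ = Ioi 0 := by
  rw [image_univ, range_comp' (r * ·) exp, range_exp, image_mul_left_Ioi hr, mul_zero]

lemma injOn_mul_exp (hr : 0 < r) : InjOn (fun t => r * exp t) univ :=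
  fun _ _ _ _ h => exp_injective (mul_left_cancel₀ hr.ne' h)

lemma integrableOn_Ioi_iff_integrable_comp_mul_exp (g : ℝ → E) (hr : 0 < r) :
    IntegrableOn g (Ioi 0) ↔ Integrable fun t => (r * exp t) • g (r * exp t) := by
  rw [← image_univ_mul_exp hr, integrableOn_image_iff_integrableOn_abs_deriv_smul
    MeasurableSet.univ (fun t _ => ((hasDerivAt_exp t).const_mul r).hasDerivWithinAt)
    (injOn_mul_exp hr), integrableOn_univ]
  simp_rw [abs_of_pos (mul_pos hr (exp_pos _))]

lemma integral_Ioi_eq_integral_comp_mul_exp (g : ℝ → E) (hr : 0 < r) :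
    ∫ x in Ioi 0, g x = ∫ t, (r * exp t) • g (r * exp t) := by
  rw [← image_univ_mul_exp hr, integral_image_eq_integral_abs_deriv_smul
    MeasurableSet.univ (fun t _ => ((hasDerivAt_exp t).const_mul r).hasDerivWithinAt)
    (injOn_mul_exp hr), Measure.restrict_univ]
  simp_rw [abs_of_pos (mul_pos hr (exp_pos _))]

end Substitution

section GIGKernel

variable {a b : ℝ}

lemma log_sqrt_mul_div_self (ha : 0 < a) (hb : 0 < b) :
    log (√(a * b) / a) = -(log (a / b) / 2) := by
  rw [log_div (by positivity) ha.ne', log_sqrt (by positivity), log_mul ha.ne' hb.ne',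
    log_div ha.ne' hb.ne']
  ring

lemma mul_add_div_eq_two_mul_cosh (ha : 0 < a) (hb : 0 < b) (t : ℝ) :
    a * (√(a * b) / a * exp t) + b / (√(a * b) / a * exp t) = 2 * √(a * b) * cosh t := by
  have hc : 0 < √(a * b) := by positivity
  rw [cosh_eq, exp_neg]
  field_simp
  rw [sq_sqrt (by positivity)]
  ring

lemma ofReal_cpow_sqrt_mul_div_self_mul_exp (ha : 0 < a) (hb : 0 < b) (ν : ℂ) (t : ℝ) :
    ((√(a * b) / a * exp t : ℝ) : ℂ) ^ ν = ((a / b : ℝ) : ℂ) ^ (-ν / 2) * cexp (ν * t) := by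
  have hr : 0 < √(a * b) / a := by positivity
  have hab : 0 < a / b := by positivity
  rw [Complex.cpow_def_of_ne_zero (by exact_mod_cast (mul_pos hr (exp_pos t)).ne'),
    Complex.cpow_def_of_ne_zero (by exact_mod_cast hab.ne'),
    ← Complex.exp_add, ← Complex.ofReal_log (by positivity), ← Complex.ofReal_log (by positivity),
    log_mul hr.ne' (exp_pos t).ne', log_exp, log_sqrt_mul_div_self ha hb]
  push_cast
  congr 1
  ring

lemma mul_exp_smul_cpow_mul_exp_neg_mul_add_div (ha : 0 < a) (hb : 0 < b) (ν : ℂ) (t : ℝ) :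
    (√(a * b) / a * exp t) • (((√(a * b) / a * exp t : ℝ) : ℂ) ^ (ν - 1) *
        (exp (-(a * (√(a * b) / a * exp t) + b / (√(a * b) / a * exp t)) / 2) : ℂ)) =
      ((a / b : ℝ) : ℂ) ^ (-ν / 2) * (cexp (ν * t) * cexp (-√(a * b) * cosh t)) := by
  have hx : ((√(a * b) / a * exp t : ℝ) : ℂ) ≠ 0 := by
    have : 0 < √(a * b) / a := by positivity
    exact_mod_cast (mul_pos this (exp_pos t)).ne'
  rw [mul_add_div_eq_two_mul_cosh ha hb, Complex.real_smul, ← mul_assoc,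
    Complex.cpow_sub _ _ hx, Complex.cpow_one, mul_div_cancel₀ _ hx,
    ofReal_cpow_sqrt_mul_div_self_mul_exp ha hb,
    show -(2 * √(a * b) * cosh t) / 2 = -√(a * b) * cosh t by ring]
  push_cast
  ring

lemma integrableOn_cpow_mul_exp_neg_mul_add_div (ha : 0 < a) (hb : 0 < b) (ν : ℂ) :
    IntegrableOn (fun x : ℝ => (x : ℂ) ^ (ν - 1) * (exp (-(a * x + b / x) / 2) : ℂ)) (Ioi 0) := by
  rw [integrableOn_Ioi_iff_integrable_comp_mul_exp _ (by positivity : 0 < √(a * b) / a)]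
  simp_rw [mul_exp_smul_cpow_mul_exp_neg_mul_add_div ha hb]
  exact (integrable_cexp_mul_mul_cexp_neg_mul_cosh ν (by positivity)).const_mul _

lemma integral_cpow_mul_exp_neg_mul_add_div (ha : 0 < a) (hb : 0 < b) (ν : ℂ) :
    ∫ x in Ioi (0 : ℝ), (x : ℂ) ^ (ν - 1) * (exp (-(a * x + b / x) / 2) : ℂ) =
      2 * ((a / b : ℝ) : ℂ) ^ (-ν / 2) * besselKC ν √(a * b) := by
  rw [integral_Ioi_eq_integral_comp_mul_exp _ (by positivity : 0 < √(a * b) / a)]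
  simp_rw [mul_exp_smul_cpow_mul_exp_neg_mul_add_div ha hb]
  rw [integral_const_mul, integral_cexp_mul_mul_cexp_neg_mul_cosh ν (by positivity)]
  ring

end GIGKernel

lemma cpow_sub_one_mul_gigDensity {a b p x : ℝ} (hx : 0 < x) (s : ℂ) :
    (x : ℂ) ^ (s - 1) * (gigDensity a b p x : ℂ) =
      (((a / b) ^ (p / 2) / (2 * besselK p √(a * b)) : ℝ) : ℂ) *
        ((x : ℂ) ^ (s + p - 1 - 1) * (exp (-(a * x + b / x) / 2) : ℂ)) := by
  have hxC : (x : ℂ) ≠ 0 := by exact_mod_cast hx.ne'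
  have hpow : (x : ℂ) ^ (s + p - 1 - 1) = (x : ℂ) ^ (s - 1) * (x : ℂ) ^ ((p - 1 : ℝ) : ℂ) := by
    rw [← Complex.cpow_add _ _ hxC]
    push_cast
    congr 1
    ring
  rw [gigDensity, if_pos hx, Complex.ofReal_mul, Complex.ofReal_mul, Complex.ofReal_cpow hx.le,
    hpow]
  ring

/-- Mellin transform of the GIG density: for every complex `s`, the Mellin integral
converges absolutely and equals `(a/b)^((1-s)/2) K_{s+p-1}(√(ab)) / K_p(√(ab))`. -/
theorem gig_mellin_transform (a b p : ℝ) (ha : 0 < a) (hb : 0 < b) (s : ℂ) :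
    MeasureTheory.IntegrableOn
        (fun x : ℝ => (x : ℂ) ^ (s - 1) * (gigDensity a b p x : ℂ)) (Set.Ioi 0) ∧
    (∫ x in Set.Ioi (0:ℝ), (x : ℂ) ^ (s - 1) * (gigDensity a b p x : ℂ))
      = ((a / b : ℝ) : ℂ) ^ ((1 - s) / 2)
          * besselKC (s + (p : ℂ) - 1) (Real.sqrt (a * b))
          / (besselK p (Real.sqrt (a * b)) : ℂ) := by
  have hgig : EqOn (fun x : ℝ => (x : ℂ) ^ (s - 1) * (gigDensity a b p x : ℂ))
      (fun x => _ * ((x : ℂ) ^ (s + p - 1 - 1) * (exp (-(a * x + b / x) / 2) : ℂ))) (Ioi 0) :=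
    fun x hx => cpow_sub_one_mul_gigDensity hx s
  refine ⟨IntegrableOn.congr_fun ((integrableOn_cpow_mul_exp_neg_mul_add_div ha hb _).const_mul _)
    hgig.symm measurableSet_Ioi, ?_⟩
  have hab : ((a / b : ℝ) : ℂ) ≠ 0 := by exact_mod_cast (div_pos ha hb).ne'
  rw [setIntegral_congr_fun measurableSet_Ioi hgig, integral_const_mul,
    integral_cpow_mul_exp_neg_mul_add_div ha hb, Complex.ofReal_div,
    Complex.ofReal_cpow (div_pos ha hb).le]
  calc _ = ((a / b : ℝ) : ℂ) ^ ((p / 2 : ℝ) : ℂ) * ((a / b : ℝ) : ℂ) ^ (-(s + p - 1) / 2) *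
        besselKC (s + p - 1) √(a * b) / besselK p √(a * b) := by push_cast; ring
    _ = _ := by rw [← Complex.cpow_add _ _ hab]; congr 3; push_cast; ring
end
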